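/- arXiv:2104.05140 — 8 statements merged into one kernel-verified Lean document; each statement's English description precedes it below -/
import Mathlib

section
/- Let R be a G-graded commutative ring and P a proper graded ideal. Then P is a graded φ_ω-r-ideal (with φ_ω(P) = ⋂_{n=1}^∞ Pⁿ) if and only if P is a graded n-almost r-ideal (with φ_n(P) = Pⁿ) for every n ≥ 2. -/
/-- An element is regular if its annihilator is zero. -/
def IsReg {R : Type*} [CommRing R] (x : R) : Prop := ∀ r : R, r * x = 0 → r = 0

/-- `P` is a graded `φ`-`r`-ideal of `R` (with `φP` denoting the value `φ(P)`). -/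
def IsGradedPhiRIdeal {G R : Type*} [AddGroup G] [DecidableEq G] [CommRing R]
    (𝒜 : G → AddSubgroup R) [GradedRing 𝒜] (P : Ideal R) (φP : Set R) : Prop :=
  P.IsHomogeneous 𝒜 ∧ P ≠ ⊤ ∧
    ∀ x y : R, SetLike.IsHomogeneousElem 𝒜 x → SetLike.IsHomogeneousElem 𝒜 y →
      x * y ∈ P → x * y ∉ φP → IsReg x → y ∈ P

/-- `P` is a graded `r`-ideal of `R`. -/
def IsGradedRIdeal {G R : Type*} [AddGroup G] [DecidableEq G] [CommRing R]
    (𝒜 : G → AddSubgroup R) [GradedRing 𝒜] (P : Ideal R) : Prop :=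
  P.IsHomogeneous 𝒜 ∧ P ≠ ⊤ ∧
    ∀ x y : R, SetLike.IsHomogeneousElem 𝒜 x → SetLike.IsHomogeneousElem 𝒜 y →
      x * y ∈ P → IsReg x → y ∈ P

/-! Enlarging `φ(P)` only weakens the `φ`-`r`-condition, and the condition for `⋂ᵢ φᵢ(P)` is the
conjunction of the conditions for the `φᵢ(P)`. Since the condition for `φ(P) = P¹` is vacuous,
`φ_ω(P) = ⋂_{n ≥ 1} Pⁿ` behaves exactly like the family `Pⁿ`, `n ≥ 2`. -/

namespace IsGradedPhiRIdeal

variable {G R : Type*} [AddGroup G] [DecidableEq G] [CommRing R]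
  {𝒜 : G → AddSubgroup R} [GradedRing 𝒜] {P : Ideal R}

theorem mono {φ ψ : Set R} (h : IsGradedPhiRIdeal 𝒜 P ψ) (hψφ : ψ ⊆ φ) :
    IsGradedPhiRIdeal 𝒜 P φ :=
  ⟨h.1, h.2.1, fun x y hx hy hxy hxyφ hreg =>
    h.2.2 x y hx hy hxy (fun hxyψ => hxyφ (hψφ hxyψ)) hreg⟩

theorem of_phi_eq_self (hhom : P.IsHomogeneous 𝒜) (hproper : P ≠ ⊤) :
    IsGradedPhiRIdeal 𝒜 P (P : Set R) :=
  ⟨hhom, hproper, fun _ _ _ _ hxy hxyP _ => absurd hxy hxyP⟩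

theorem iInter {ι : Sort*} {φ : ι → Set R} (hhom : P.IsHomogeneous 𝒜) (hproper : P ≠ ⊤)
    (h : ∀ i, IsGradedPhiRIdeal 𝒜 P (φ i)) : IsGradedPhiRIdeal 𝒜 P (⋂ i, φ i) := by
  refine ⟨hhom, hproper, fun x y hx hy hxy hxyφ hreg => ?_⟩
  obtain ⟨i, hi⟩ := not_forall.mp (Set.mem_iInter.not.mp hxyφ)
  exact (h i).2.2 x y hx hy hxy hi hreg

end IsGradedPhiRIdeal

theorem stmt1_general {G R : Type*} [AddGroup G] [DecidableEq G] [CommRing R]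
    (𝒜 : G → AddSubgroup R) [GradedRing 𝒜]
    (P : Ideal R) (hhom : P.IsHomogeneous 𝒜) (hproper : P ≠ ⊤) :
    IsGradedPhiRIdeal 𝒜 P {x : R | ∀ n : ℕ, 1 ≤ n → x ∈ P ^ n} ↔
      ∀ n : ℕ, 2 ≤ n → IsGradedPhiRIdeal 𝒜 P ((P ^ n : Ideal R) : Set R) := by
  have hω : {x : R | ∀ n : ℕ, 1 ≤ n → x ∈ P ^ n} =
      ⋂ n : {n : ℕ // 1 ≤ n}, ((P ^ n.1 : Ideal R) : Set R) := by
    ext x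
    simp
  refine ⟨fun h n hn => h.mono fun x hx => hx n (by omega), fun h => ?_⟩
  rw [hω]
  refine IsGradedPhiRIdeal.iInter hhom hproper fun ⟨n, hn⟩ => ?_
  rcases hn.eq_or_lt with rfl | hn
  · simpa using IsGradedPhiRIdeal.of_phi_eq_self hhom hproper
  · exact h n hn

theorem stmt1 {G R : Type*} [AddGroup G] [DecidableEq G] [CommRing R] [Nontrivial R]
    (𝒜 : G → AddSubgroup R) [GradedRing 𝒜]
    (P : Ideal R) (hhom : P.IsHomogeneous 𝒜) (hproper : P ≠ ⊤) :
    IsGradedPhiRIdeal 𝒜 P {x : R | ∀ n : ℕ, 1 ≤ n → x ∈ P ^ n} ↔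
      ∀ n : ℕ, 2 ≤ n → IsGradedPhiRIdeal 𝒜 P ((P ^ n : Ideal R) : Set R) :=
  stmt1_general 𝒜 P hhom hproper
end

section
/- Let R be a G-graded commutative ring and P a proper graded ideal with φ(P) ⊆ P a graded ideal. If P/φ(P) is a graded r-ideal of R/φ(P) and φ(P) is a graded r-ideal of R, then P is a graded φ-r-ideal of R. -/
theorem IsGradedRIdeal.isReg_mk {G R : Type*} [AddGroup G] [DecidableEq G] [CommRing R]
    {𝒜 : G → AddSubgroup R} [GradedRing 𝒜] {Q : Ideal R} (hQ : IsGradedRIdeal 𝒜 Q) {x : R}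
    (hx : SetLike.IsHomogeneousElem 𝒜 x) (hreg : IsReg x) :
    IsReg (Ideal.Quotient.mk Q x) := by
  intro r hr
  obtain ⟨s, rfl⟩ := Ideal.Quotient.mk_surjective r
  rw [← map_mul, Ideal.Quotient.eq_zero_iff_mem] at hr
  rw [Ideal.Quotient.eq_zero_iff_mem, Ideal.IsHomogeneous.mem_iff 𝒜 hQ.1]
  intro i
  obtain ⟨g, hxg⟩ := hx
  have hcomp : (DirectSum.decompose 𝒜 (s * x) (i + g) : R) ∈ Q := hQ.1 (i + g) hr
  rw [DirectSum.coe_decompose_mul_add_of_right_mem 𝒜 hxg, mul_comm] at hcomp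
  exact hQ.2.2 x _ ⟨g, hxg⟩ ⟨i, SetLike.coe_mem _⟩ hcomp hreg

theorem stmt4_general {G R : Type*} [AddGroup G] [DecidableEq G] [CommRing R]
    (𝒜 : G → AddSubgroup R) [GradedRing 𝒜]
    (P Q : Ideal R) (hQP : Q ≤ P)
    (hPhom : P.IsHomogeneous 𝒜) (hPproper : P ≠ ⊤)
    (hQr : IsGradedRIdeal 𝒜 Q)
    (hquot : Ideal.map (Ideal.Quotient.mk Q) P ≠ ⊤ ∧
      ∀ x y : R ⧸ Q,
        (∃ a : R, SetLike.IsHomogeneousElem 𝒜 a ∧ Ideal.Quotient.mk Q a = x) →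
        (∃ b : R, SetLike.IsHomogeneousElem 𝒜 b ∧ Ideal.Quotient.mk Q b = y) →
        x * y ∈ Ideal.map (Ideal.Quotient.mk Q) P →
        (∀ r : R ⧸ Q, r * x = 0 → r = 0) →
        y ∈ Ideal.map (Ideal.Quotient.mk Q) P) :
    IsGradedPhiRIdeal 𝒜 P (Q : Set R) := by
  refine ⟨hPhom, hPproper, fun x y hx hy hxyP _ hreg => ?_⟩
  have hxyP' : Ideal.Quotient.mk Q x * Ideal.Quotient.mk Q y ∈ P.map (Ideal.Quotient.mk Q) := by
    rw [← map_mul]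
    exact Ideal.mem_map_of_mem _ hxyP
  rw [← Ideal.mem_quotient_iff_mem hQP]
  exact hquot.2 _ _ ⟨x, hx, rfl⟩ ⟨y, hy, rfl⟩ hxyP' (hQr.isReg_mk hx hreg)

theorem stmt4 {G R : Type*} [AddGroup G] [DecidableEq G] [CommRing R] [Nontrivial R]
    (𝒜 : G → AddSubgroup R) [GradedRing 𝒜]
    (P Q : Ideal R) (hQP : Q ≤ P)
    (hPhom : P.IsHomogeneous 𝒜) (hPproper : P ≠ ⊤)
    (hQr : IsGradedRIdeal 𝒜 Q)
    (hquot : Ideal.map (Ideal.Quotient.mk Q) P ≠ ⊤ ∧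
      ∀ x y : R ⧸ Q,
        (∃ a : R, SetLike.IsHomogeneousElem 𝒜 a ∧ Ideal.Quotient.mk Q a = x) →
        (∃ b : R, SetLike.IsHomogeneousElem 𝒜 b ∧ Ideal.Quotient.mk Q b = y) →
        x * y ∈ Ideal.map (Ideal.Quotient.mk Q) P →
        (∀ r : R ⧸ Q, r * x = 0 → r = 0) →
        y ∈ Ideal.map (Ideal.Quotient.mk Q) P) :
    IsGradedPhiRIdeal 𝒜 P (Q : Set R) :=
  stmt4_general 𝒜 P Q hQP hPhom hPproper hQr hquot
end

section
/- Let R be a G-graded commutative ring, P a proper graded ideal, a ∈ h(R) \ P, and suppose (φ(P) : a) ⊆ φ((P : a)). If P is a graded φ-r-ideal of R, then (P : a) is a graded φ-r-ideal of R. -/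
/- Multiplication by a homogeneous `a` of degree `j` shifts the degree-`i` component of `r` to the
degree-`(j + i)` component of `a * r`, so `(P : a)` inherits homogeneity from `P`. -/
theorem Ideal.IsHomogeneous.colon_span_singleton {ι σ A : Type*} [DecidableEq ι]
    [AddLeftCancelMonoid ι] [CommSemiring A] [SetLike σ A] [AddSubmonoidClass σ A]
    (𝒜 : ι → σ) [GradedRing 𝒜] {P : Ideal A} (hP : P.IsHomogeneous 𝒜) {a : A}
    (ha : SetLike.IsHomogeneousElem 𝒜 a) : (P.colon (Ideal.span {a})).IsHomogeneous 𝒜 := by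
  obtain ⟨j, haj⟩ := ha
  intro i r hr
  rw [Ideal.mem_colon_span_singleton, mul_comm] at hr ⊢
  simpa only [DirectSum.coe_decompose_mul_add_of_left_mem 𝒜 haj] using hP (j + i) hr

theorem Ideal.colon_span_singleton_ne_top {R : Type*} [CommSemiring R] {I : Ideal R} {a : R}
    (haI : a ∉ I) : I.colon (Ideal.span {a}) ≠ ⊤ := by
  simpa using haI

theorem IsGradedPhiRIdeal.mem_colon_span_singleton {G R : Type*} [AddGroup G] [DecidableEq G]
    [CommRing R] {𝒜 : G → AddSubgroup R} [GradedRing 𝒜] {P : Ideal R} {φP φQ : Set R}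
    (hP : IsGradedPhiRIdeal 𝒜 P φP) {a : R} (ha : SetLike.IsHomogeneousElem 𝒜 a)
    (hcolon : {b : R | a * b ∈ φP} ⊆ φQ) {x y : R} (hx : SetLike.IsHomogeneousElem 𝒜 x)
    (hy : SetLike.IsHomogeneousElem 𝒜 y) (hxy : x * y ∈ P.colon (Ideal.span {a}))
    (hxyφ : x * y ∉ φQ) (hreg : IsReg x) : y ∈ P.colon (Ideal.span {a}) := by
  rw [Ideal.mem_colon_span_singleton] at hxy ⊢
  have hxay : x * (a * y) ∈ P := by rwa [← mul_assoc, mul_right_comm]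
  have hxayφ : x * (a * y) ∉ φP := fun h ↦
    hxyφ (hcolon (show a * (x * y) ∈ φP by rwa [mul_left_comm]))
  rw [mul_comm]
  exact hP.2.2 x (a * y) hx (ha.mul hy) hxay hxayφ hreg

theorem stmt11_general {G R : Type*} [AddGroup G] [DecidableEq G] [CommRing R]
    (𝒜 : G → AddSubgroup R) [GradedRing 𝒜]
    (P : Ideal R) (φ : Ideal R → Set R)
    (a : R) (ha : SetLike.IsHomogeneousElem 𝒜 a) (haP : a ∉ P)
    (hcolon : {b : R | a * b ∈ φ P} ⊆ φ (P.colon (Ideal.span {a})))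
    (hP : IsGradedPhiRIdeal 𝒜 P (φ P)) :
    IsGradedPhiRIdeal 𝒜 (P.colon (Ideal.span {a})) (φ (P.colon (Ideal.span {a}))) :=
  ⟨hP.1.colon_span_singleton 𝒜 ha, Ideal.colon_span_singleton_ne_top haP,
    fun _ _ hx hy ↦ hP.mem_colon_span_singleton ha hcolon hx hy⟩

theorem stmt11 {G R : Type*} [AddGroup G] [DecidableEq G] [CommRing R] [Nontrivial R]
    (𝒜 : G → AddSubgroup R) [GradedRing 𝒜]
    (P : Ideal R) (φ : Ideal R → Set R)
    (a : R) (ha : SetLike.IsHomogeneousElem 𝒜 a) (haP : a ∉ P)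
    (hcolon : {b : R | a * b ∈ φ P} ⊆ φ (P.colon (Ideal.span {a})))
    (hP : IsGradedPhiRIdeal 𝒜 P (φ P)) :
    IsGradedPhiRIdeal 𝒜 (P.colon (Ideal.span {a})) (φ (P.colon (Ideal.span {a}))) :=
  stmt11_general 𝒜 P φ a ha haP hcolon hP
end

section
/- Let R be a G-graded commutative ring, P a graded φ-r-ideal of R with φ(P) ⊆ P a graded r-ideal of R. Let I and J be graded ideals of R with IJ ⊆ P, IJ ⊄ φ(P), Ann(I) = {0}, and suppose Ann(I) = Ann(c) for some homogeneous c ∈ I. Then J ⊆ P. -/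
section

variable {G R : Type*} [AddGroup G] [DecidableEq G] [CommRing R]
  {𝒜 : G → AddSubgroup R} [GradedRing 𝒜]

theorem Ideal.IsHomogeneous.le_of_forall_isHomogeneousElem {J P : Ideal R}
    (hJ : J.IsHomogeneous 𝒜) (h : ∀ y ∈ J, SetLike.IsHomogeneousElem 𝒜 y → y ∈ P) :
    J ≤ P := by
  rw [← hJ.toIdeal_homogeneousCore_eq_self]
  refine Ideal.span_le.2 ?_
  rintro _ ⟨⟨y, hy⟩, hyJ, rfl⟩
  exact h y hyJ hy

theorem IsGradedPhiRIdeal.isGradedRIdeal {P Q : Ideal R} (hP : IsGradedPhiRIdeal 𝒜 P Q)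
    (hQr : IsGradedRIdeal 𝒜 Q) (hQP : Q ≤ P) : IsGradedRIdeal 𝒜 P := by
  refine ⟨hP.1, hP.2.1, fun x y hx hy hxy hreg => ?_⟩
  by_cases hxyQ : x * y ∈ Q
  · exact hQP (hQr.2.2 x y hx hy hxyQ hreg)
  · exact hP.2.2 x y hx hy hxy hxyQ hreg

theorem IsGradedRIdeal.le_of_mul_le {P I J : Ideal R} (hP : IsGradedRIdeal 𝒜 P)
    (hJ : J.IsHomogeneous 𝒜) {c : R} (hc : c ∈ I) (hchom : SetLike.IsHomogeneousElem 𝒜 c)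
    (hreg : IsReg c) (hIJ : I * J ≤ P) : J ≤ P :=
  hJ.le_of_forall_isHomogeneousElem fun y hyJ hy =>
    hP.2.2 c y hchom hy (hIJ (Ideal.mul_mem_mul hc hyJ)) hreg

end

theorem stmt13_general {G R : Type*} [AddGroup G] [DecidableEq G] [CommRing R]
    (𝒜 : G → AddSubgroup R) [GradedRing 𝒜]
    (P Q : Ideal R) (hQP : Q ≤ P) (hQr : IsGradedRIdeal 𝒜 Q)
    (hP : IsGradedPhiRIdeal 𝒜 P (Q : Set R))
    (I J : Ideal R) (hJ : J.IsHomogeneous 𝒜)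
    (hIJ : I * J ≤ P)
    (hAnnI : ∀ r : R, (∀ i ∈ I, r * i = 0) → r = 0)
    (c : R) (hc : c ∈ I) (hchom : SetLike.IsHomogeneousElem 𝒜 c)
    (hAnn : ∀ r : R, (∀ i ∈ I, r * i = 0) ↔ r * c = 0) :
    J ≤ P :=
  have hreg : IsReg c := fun r hr => hAnnI r ((hAnn r).2 hr)
  (hP.isGradedRIdeal hQr hQP).le_of_mul_le hJ hc hchom hreg hIJ

theorem stmt13 {G R : Type*} [AddGroup G] [DecidableEq G] [CommRing R] [Nontrivial R]
    (𝒜 : G → AddSubgroup R) [GradedRing 𝒜]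
    (P Q : Ideal R) (hQP : Q ≤ P) (hQr : IsGradedRIdeal 𝒜 Q)
    (hP : IsGradedPhiRIdeal 𝒜 P (Q : Set R))
    (I J : Ideal R) (hI : I.IsHomogeneous 𝒜) (hJ : J.IsHomogeneous 𝒜)
    (hIJ : I * J ≤ P) (hIJphi : ¬ ((I * J : Ideal R) : Set R) ⊆ (Q : Set R))
    (hAnnI : ∀ r : R, (∀ i ∈ I, r * i = 0) → r = 0)
    (c : R) (hc : c ∈ I) (hchom : SetLike.IsHomogeneousElem 𝒜 c)
    (hAnn : ∀ r : R, (∀ i ∈ I, r * i = 0) ↔ r * c = 0) :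
    J ≤ P :=
  stmt13_general 𝒜 P Q hQP hQr hP I J hJ hIJ hAnnI c hc hchom hAnn
end

section
/- Let R be a G-graded commutative ring and P a graded r-ideal of R contained in a graded ideal I of R. If I/P is a graded r-ideal of R/P, then I is a graded φ-r-ideal of R for any function φ on graded ideals with φ(I) ⊆ I. -/
namespace IsGradedRIdeal

variable {G R : Type*} [AddGroup G] [DecidableEq G] [CommRing R]
  {𝒜 : G → AddSubgroup R} [GradedRing 𝒜] {P : Ideal R}

/-- The degree-`i` component of `r` times `x` is the degree-`(i + g)` component of `r * x`. -/
theorem mem_of_mul_mem (hP : IsGradedRIdeal 𝒜 P) {x r : R}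
    (hx : SetLike.IsHomogeneousElem 𝒜 x) (hreg : IsReg x) (hrx : r * x ∈ P) : r ∈ P := by
  obtain ⟨hPhom, -, hPr⟩ := hP
  obtain ⟨g, hxg⟩ := hx
  refine hPhom.mem_iff.mpr fun i => hPr x _ ⟨g, hxg⟩ ⟨i, SetLike.coe_mem _⟩ ?_ hreg
  rw [mul_comm, ← DirectSum.coe_decompose_mul_add_of_right_mem 𝒜 hxg]
  exact hPhom.mem_iff.mp hrx (i + g)

theorem isReg_mk_s15 (hP : IsGradedRIdeal 𝒜 P) {x : R}
    (hx : SetLike.IsHomogeneousElem 𝒜 x) (hreg : IsReg x) :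
    IsReg (Ideal.Quotient.mk P x) := by
  intro r hr
  obtain ⟨r, rfl⟩ := Ideal.Quotient.mk_surjective r
  rw [← map_mul, Ideal.Quotient.eq_zero_iff_mem] at hr
  exact Ideal.Quotient.eq_zero_iff_mem.mpr (hP.mem_of_mul_mem hx hreg hr)

end IsGradedRIdeal

theorem stmt15_general {G R : Type*} [AddGroup G] [DecidableEq G] [CommRing R]
    (𝒜 : G → AddSubgroup R) [GradedRing 𝒜]
    (P I : Ideal R) (hPr : IsGradedRIdeal 𝒜 P) (hPI : P ≤ I)
    (hIhom : I.IsHomogeneous 𝒜)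
    (φI : Set R)
    (hquot : Ideal.map (Ideal.Quotient.mk P) I ≠ ⊤ ∧
      ∀ x y : R ⧸ P,
        (∃ a : R, SetLike.IsHomogeneousElem 𝒜 a ∧ Ideal.Quotient.mk P a = x) →
        (∃ b : R, SetLike.IsHomogeneousElem 𝒜 b ∧ Ideal.Quotient.mk P b = y) →
        x * y ∈ Ideal.map (Ideal.Quotient.mk P) I →
        (∀ r : R ⧸ P, r * x = 0 → r = 0) →
        y ∈ Ideal.map (Ideal.Quotient.mk P) I) :
    IsGradedPhiRIdeal 𝒜 I φI := by
  obtain ⟨hne, hrideal⟩ := hquot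
  refine ⟨hIhom, fun hI => hne (by rw [hI, Ideal.map_top]), ?_⟩
  intro x y hx hy hxy _ hreg
  rw [← Ideal.mem_quotient_iff_mem hPI] at hxy ⊢
  exact hrideal _ _ ⟨x, hx, rfl⟩ ⟨y, hy, rfl⟩ (by rwa [← map_mul])
    (hPr.isReg_mk_s15 hx hreg)

theorem stmt15 {G R : Type*} [AddGroup G] [DecidableEq G] [CommRing R] [Nontrivial R]
    (𝒜 : G → AddSubgroup R) [GradedRing 𝒜]
    (P I : Ideal R) (hPr : IsGradedRIdeal 𝒜 P) (hPI : P ≤ I)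
    (hIhom : I.IsHomogeneous 𝒜)
    (φI : Set R) (hsub : φI ⊆ (I : Set R))
    (hquot : Ideal.map (Ideal.Quotient.mk P) I ≠ ⊤ ∧
      ∀ x y : R ⧸ P,
        (∃ a : R, SetLike.IsHomogeneousElem 𝒜 a ∧ Ideal.Quotient.mk P a = x) →
        (∃ b : R, SetLike.IsHomogeneousElem 𝒜 b ∧ Ideal.Quotient.mk P b = y) →
        x * y ∈ Ideal.map (Ideal.Quotient.mk P) I →
        (∀ r : R ⧸ P, r * x = 0 → r = 0) →
        y ∈ Ideal.map (Ideal.Quotient.mk P) I) :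
    IsGradedPhiRIdeal 𝒜 I φI :=
  stmt15_general 𝒜 P I hPr hPI hIhom φI hquot
end

section
/- Let R be a G-graded commutative ring and P a proper graded ideal with φ(P) ⊆ P. Then P is a graded φ-pure ideal of R if and only if for every nonzero x ∈ (P ∩ h(R)) \ φ(P), there exists y ∈ P_e = P ∩ R_e such that x = xy. -/
theorem GradedRing.eq_zero_of_mul_eq_self {ι R σ : Type*} [AddLeftCancelMonoid ι]
    [DecidableEq ι] [Semiring R] [SetLike σ R] [AddSubmonoidClass σ R] (𝒜 : ι → σ)
    [GradedRing 𝒜] {x y : R} {i : ι} (hx : SetLike.IsHomogeneousElem 𝒜 x) (hx0 : x ≠ 0)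
    (hy : y ∈ 𝒜 i) (hxy : x * y = x) :
    i = 0 := by
  obtain ⟨j, hxj⟩ := hx
  have hxji : x ∈ 𝒜 (j + i) := hxy ▸ SetLike.mul_mem_graded hxj hy
  exact left_eq_add.mp (DirectSum.degree_eq_of_mem_mem 𝒜 hxj hxji hx0)

theorem stmt16_general {G R : Type*} [AddGroup G] [DecidableEq G] [CommRing R]
    (𝒜 : G → AddSubgroup R) [GradedRing 𝒜]
    (P : Ideal R)
    (φP : Set R) :
    (∀ x : R, x ∈ P → SetLike.IsHomogeneousElem 𝒜 x → x ∉ φP →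
        ∃ y : R, y ∈ P ∧ SetLike.IsHomogeneousElem 𝒜 y ∧ x = x * y) ↔
      (∀ x : R, x ≠ 0 → x ∈ P → SetLike.IsHomogeneousElem 𝒜 x → x ∉ φP →
        ∃ y : R, y ∈ P ∧ y ∈ 𝒜 (0 : G) ∧ x = x * y) := by
  constructor
  · intro hpure x hx0 hxP hx hxφ
    obtain ⟨y, hyP, ⟨i, hyi⟩, hxy⟩ := hpure x hxP hx hxφ
    obtain rfl := GradedRing.eq_zero_of_mul_eq_self 𝒜 hx hx0 hyi hxy.symm
    exact ⟨y, hyP, hyi, hxy⟩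
  · intro hpure x hxP hx hxφ
    by_cases hx0 : x = 0
    · exact ⟨0, P.zero_mem, ⟨0, zero_mem _⟩, by rw [hx0, zero_mul]⟩
    · obtain ⟨y, hyP, hy0, hxy⟩ := hpure x hx0 hxP hx hxφ
      exact ⟨y, hyP, ⟨0, hy0⟩, hxy⟩

theorem stmt16 {G R : Type*} [AddGroup G] [DecidableEq G] [CommRing R] [Nontrivial R]
    (𝒜 : G → AddSubgroup R) [GradedRing 𝒜]
    (P : Ideal R) (hhom : P.IsHomogeneous 𝒜) (hproper : P ≠ ⊤)
    (φP : Set R) (hsub : φP ⊆ (P : Set R)) :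
    (∀ x : R, x ∈ P → SetLike.IsHomogeneousElem 𝒜 x → x ∉ φP →
        ∃ y : R, y ∈ P ∧ SetLike.IsHomogeneousElem 𝒜 y ∧ x = x * y) ↔
      (∀ x : R, x ≠ 0 → x ∈ P → SetLike.IsHomogeneousElem 𝒜 x → x ∉ φP →
        ∃ y : R, y ∈ P ∧ y ∈ 𝒜 (0 : G) ∧ x = x * y) :=
  stmt16_general 𝒜 P φP
end

section
/- Let G be an abelian group, R a G-graded commutative ring, and M a G-graded R-module with Zd(R) = Zd(M), where Zd(M) = {a ∈ R : am = 0 for some nonzero m ∈ M}. Let φ₁ be a function on graded ideals of R and φ₂ a function on graded ideals of the idealization R(+)M with φ₂(P(+)M) = φ₁(P)(+)M for every proper graded ideal P of R. If P(+)M is a graded φ₂-r-ideal of R(+)M, then P is a graded φ₁-r-ideal of R. -/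
/-! Embed `R` into `R(+)M` by `x ↦ (x, 0)`. This preserves homogeneity and carries
membership in `P` and in `φ₁(P)` to membership in `P(+)M` and in `φ₂(P(+)M)`. Since
`Zd(R) = Zd(M)`, an `x` with `Ann(x) = 0` also annihilates no nonzero element of `M`,
so `(x, 0)` has zero annihilator in `R(+)M`. The `r`-ideal property of `P(+)M` then
applies to `(x, 0)(y, 0) = (xy, 0)`. -/

open TrivSqZeroExt

theorem smul_eq_zero_of_isReg {R M : Type*} [CommRing R] [AddCommGroup M] [Module R M]
    (hZd : ∀ a : R, (∃ m : M, m ≠ 0 ∧ a • m = 0) → ∃ b : R, b ≠ 0 ∧ a * b = 0)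
    {x : R} (hx : IsReg x) {m : M} (hm : x • m = 0) : m = 0 := by
  by_contra hne
  obtain ⟨b, hb, hxb⟩ := hZd x ⟨m, hne, hm⟩
  exact hb (hx b (by rwa [mul_comm]))

namespace TrivSqZeroExt

variable {R M : Type*} [CommRing R] [AddCommGroup M] [Module R M] [Module Rᵐᵒᵖ M]
  [IsCentralScalar R M]

theorem eq_zero_of_mul_inl_eq_zero {x : R} (hR : IsReg x) (hM : ∀ m : M, x • m = 0 → m = 0)
    {u : TrivSqZeroExt R M} (hu : u * inl x = 0) : u = 0 := by
  rw [mul_inl_eq_op_smul] at hu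
  have hfst : u.fst * x = 0 := congrArg fst hu
  have hsnd : x • u.snd = 0 := by simpa [op_smul_eq_smul] using congrArg snd hu
  exact ext (hR _ hfst) (hM _ hsnd)

theorem mem_comap_fstHom {P : Ideal R} {z : TrivSqZeroExt R M} :
    z ∈ Ideal.comap (fstHom R R M).toRingHom P ↔ z.fst ∈ P :=
  Iff.rfl

end TrivSqZeroExt

theorem stmt18_general {G R M : Type*} [AddCommGroup G] [DecidableEq G]
    [CommRing R] [AddCommGroup M] [Module R M]
    [Module Rᵐᵒᵖ M] [IsCentralScalar R M]
    (𝒜 : G → AddSubgroup R) [GradedRing 𝒜]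
    (ℳ : G → AddSubgroup M)
    -- Zd(R) = Zd(M)
    (hZd : ∀ a : R, (∃ b : R, b ≠ 0 ∧ a * b = 0) ↔ (∃ m : M, m ≠ 0 ∧ a • m = 0))
    (φ₁ : Ideal R → Set R)
    (φ₂ : Ideal (TrivSqZeroExt R M) → Set (TrivSqZeroExt R M))
    -- φ₂(P(+)M) = φ₁(P)(+)M for every proper graded ideal P of R
    (hφ : ∀ P : Ideal R, P.IsHomogeneous 𝒜 → P ≠ ⊤ →
      φ₂ (Ideal.comap (fstHom R R M).toRingHom P) =
        {z : TrivSqZeroExt R M | z.fst ∈ φ₁ P})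
    (P : Ideal R) (hPhom : P.IsHomogeneous 𝒜) (hPproper : P ≠ ⊤)
    -- P(+)M is a graded φ₂-r-ideal of R(+)M
    (hPM : Ideal.comap (fstHom R R M).toRingHom P ≠ ⊤ ∧
      ∀ z w : TrivSqZeroExt R M,
        (∃ g : G, z.fst ∈ 𝒜 g ∧ z.snd ∈ ℳ g) →
        (∃ g : G, w.fst ∈ 𝒜 g ∧ w.snd ∈ ℳ g) →
        z * w ∈ Ideal.comap (fstHom R R M).toRingHom P →
        z * w ∉ φ₂ (Ideal.comap (fstHom R R M).toRingHom P) →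
        (∀ u : TrivSqZeroExt R M, u * z = 0 → u = 0) →
        w ∈ Ideal.comap (fstHom R R M).toRingHom P) :
    IsGradedPhiRIdeal 𝒜 P (φ₁ P) := by
  refine ⟨hPhom, hPproper, fun x y ⟨gx, hx⟩ ⟨gy, hy⟩ hxy hxyφ hreg => ?_⟩
  have hinlHom : ∀ {g : G} {r : R}, r ∈ 𝒜 g →
      (inl r : TrivSqZeroExt R M).fst ∈ 𝒜 g ∧ (inl r : TrivSqZeroExt R M).snd ∈ ℳ g :=
    fun hr => ⟨hr, (ℳ _).zero_mem⟩
  have hregInl : ∀ u : TrivSqZeroExt R M, u * inl x = 0 → u = 0 := fun _ =>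
    eq_zero_of_mul_inl_eq_zero hreg fun _ => smul_eq_zero_of_isReg (fun a => (hZd a).2) hreg
  have hnotφ : inl x * inl y ∉ φ₂ (Ideal.comap (fstHom R R M).toRingHom P) := by
    rwa [hφ P hPhom hPproper]
  exact mem_comap_fstHom.1 <|
    hPM.2 (inl x) (inl y) ⟨gx, hinlHom hx⟩ ⟨gy, hinlHom hy⟩ (mem_comap_fstHom.2 hxy) hnotφ hregInl

open TrivSqZeroExt in
theorem stmt18 {G R M : Type*} [AddCommGroup G] [DecidableEq G]
    [CommRing R] [Nontrivial R] [AddCommGroup M] [Module R M]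
    [Module Rᵐᵒᵖ M] [IsCentralScalar R M]
    (𝒜 : G → AddSubgroup R) [GradedRing 𝒜]
    (ℳ : G → AddSubgroup M) [SetLike.GradedSMul 𝒜 ℳ] [DirectSum.Decomposition ℳ]
    -- Zd(R) = Zd(M)
    (hZd : ∀ a : R, (∃ b : R, b ≠ 0 ∧ a * b = 0) ↔ (∃ m : M, m ≠ 0 ∧ a • m = 0))
    (φ₁ : Ideal R → Set R)
    (φ₂ : Ideal (TrivSqZeroExt R M) → Set (TrivSqZeroExt R M))
    -- φ₂(P(+)M) = φ₁(P)(+)M for every proper graded ideal P of R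
    (hφ : ∀ P : Ideal R, P.IsHomogeneous 𝒜 → P ≠ ⊤ →
      φ₂ (Ideal.comap (fstHom R R M).toRingHom P) =
        {z : TrivSqZeroExt R M | z.fst ∈ φ₁ P})
    (P : Ideal R) (hPhom : P.IsHomogeneous 𝒜) (hPproper : P ≠ ⊤)
    -- P(+)M is a graded φ₂-r-ideal of R(+)M
    (hPM : Ideal.comap (fstHom R R M).toRingHom P ≠ ⊤ ∧
      ∀ z w : TrivSqZeroExt R M,
        (∃ g : G, z.fst ∈ 𝒜 g ∧ z.snd ∈ ℳ g) →
        (∃ g : G, w.fst ∈ 𝒜 g ∧ w.snd ∈ ℳ g) →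
        z * w ∈ Ideal.comap (fstHom R R M).toRingHom P →
        z * w ∉ φ₂ (Ideal.comap (fstHom R R M).toRingHom P) →
        (∀ u : TrivSqZeroExt R M, u * z = 0 → u = 0) →
        w ∈ Ideal.comap (fstHom R R M).toRingHom P) :
    IsGradedPhiRIdeal 𝒜 P (φ₁ P) :=
  stmt18_general 𝒜 ℳ hZd φ₁ φ₂ hφ P hPhom hPproper hPM
end

section
/- Let R be a G-graded commutative ring and S ⊆ h(R) a multiplicative set with S ⊆ r(R) = {a : Ann(a) = {0}}. If P is a graded φ-r-ideal of R with S ∩ P = ∅ and S⁻¹φ(P) ⊆ φ_S(S⁻¹P), then S⁻¹P is a graded φ_S-r-ideal of S⁻¹R, where φ_S(I) = S⁻¹φ(I ∩ R) for graded ideals I of S⁻¹R. -/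
/-!
A fraction `a/t` of `S⁻¹R` kills no nonzero element only if `a` kills none in `R`, since `S`
consists of regular elements. If `(a/t)(b/u) ∈ S⁻¹P`, some `w ∈ S` gives `(w a) b ∈ P`, and if
`(a/t)(b/u) ∉ S⁻¹φ(P)` then `(w a) b ∉ φ(P)` for the same `w`; since `w a` is homogeneous and
regular, the `φ`-`r` property of `P` gives `b ∈ P`, i.e. `b/u ∈ S⁻¹P`.
-/

theorem IsReg.mul {R : Type*} [CommRing R] {x y : R} (hx : IsReg x) (hy : IsReg y) :
    IsReg (x * y) :=
  fun r h => hx r (hy _ (by rwa [mul_assoc]))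

theorem isReg_iff_mem_nonZeroDivisors {R : Type*} [CommRing R] {x : R} :
    IsReg x ↔ x ∈ nonZeroDivisors R :=
  mem_nonZeroDivisors_iff_right.symm

namespace IsLocalization

variable {R S : Type*} [CommRing R] [CommRing S] [Algebra R S] {M : Submonoid R}
  [IsLocalization M S]

theorem isReg_of_isReg_mk' (hM : M ≤ nonZeroDivisors R) {a : R} {t : M}
    (h : IsReg (mk' S a t)) : IsReg a := by
  intro r hr
  have hr' : algebraMap R S r * mk' S a t = 0 := by
    rw [mul_mk'_eq_mk'_of_mul, hr, mk'_zero]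
  exact (to_map_eq_zero_iff S hM).mp (h _ hr')

theorem mem_of_mk'_mul_mem_map {G : Type*} [AddGroup G] [DecidableEq G]
    {𝒜 : G → AddSubgroup R} [GradedRing 𝒜]
    (hMhom : ∀ w ∈ M, SetLike.IsHomogeneousElem 𝒜 w) (hMreg : ∀ w ∈ M, IsReg w)
    {P Q : Ideal R} (hP : IsGradedPhiRIdeal 𝒜 P Q) {a b : R} {t : M}
    (ha : SetLike.IsHomogeneousElem 𝒜 a) (hb : SetLike.IsHomogeneousElem 𝒜 b)
    (hareg : IsReg a) (hmem : mk' S (a * b) t ∈ P.map (algebraMap R S))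
    (hnot : mk' S (a * b) t ∉ Q.map (algebraMap R S)) : b ∈ P := by
  obtain ⟨w, hw, hwab⟩ := (mk'_mem_map_algebraMap_iff M S P (a * b) t).mp hmem
  have hφ : w * a * b ∉ Q := fun hQ =>
    hnot ((mk'_mem_map_algebraMap_iff M S Q (a * b) t).mpr ⟨w, hw, by rwa [← mul_assoc]⟩)
  exact hP.2.2 (w * a) b ((hMhom w hw).mul ha) hb (by rwa [mul_assoc]) hφ
    ((hMreg w hw).mul hareg)

theorem mk'_mem_map_of_mem {P : Ideal R} {b : R} (hb : b ∈ P) (u : M) :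
    mk' S b u ∈ P.map (algebraMap R S) :=
  (mk'_mem_map_algebraMap_iff M S P b u).mpr ⟨1, M.one_mem, by rwa [one_mul]⟩

end IsLocalization

theorem stmt19_general {G R : Type*} [AddGroup G] [DecidableEq G] [CommRing R]
    (𝒜 : G → AddSubgroup R) [GradedRing 𝒜]
    (s : Submonoid R)
    (hShom : ∀ t ∈ s, SetLike.IsHomogeneousElem 𝒜 t)
    (hSreg : ∀ t ∈ s, IsReg t)
    (P : Ideal R) (φ : Ideal R → Ideal R)
    (hP : IsGradedPhiRIdeal 𝒜 P ((φ P : Ideal R) : Set R))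
    (hSP : ∀ t ∈ s, t ∉ P)
    -- S⁻¹φ(P) ⊆ φ_S(S⁻¹P), where φ_S(I) = S⁻¹φ(I ∩ R)
    (hsub : Ideal.map (algebraMap R (Localization s)) (φ P) ≤
      Ideal.map (algebraMap R (Localization s))
        (φ (Ideal.comap (algebraMap R (Localization s))
          (Ideal.map (algebraMap R (Localization s)) P)))) :
    -- S⁻¹P is a graded φ_S-r-ideal of S⁻¹R
    Ideal.map (algebraMap R (Localization s)) P ≠ ⊤ ∧
      ∀ x y : Localization s,
        (∃ (a : R) (t : s), SetLike.IsHomogeneousElem 𝒜 a ∧ x = Localization.mk a t) →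
        (∃ (b : R) (u : s), SetLike.IsHomogeneousElem 𝒜 b ∧ y = Localization.mk b u) →
        x * y ∈ Ideal.map (algebraMap R (Localization s)) P →
        x * y ∉ (Ideal.map (algebraMap R (Localization s))
          (φ (Ideal.comap (algebraMap R (Localization s))
            (Ideal.map (algebraMap R (Localization s)) P))) : Set (Localization s)) →
        (∀ r : Localization s, r * x = 0 → r = 0) →
        y ∈ Ideal.map (algebraMap R (Localization s)) P := by
  have hS : s ≤ nonZeroDivisors R := fun t ht => isReg_iff_mem_nonZeroDivisors.mp (hSreg t ht)
  refine ⟨(IsLocalization.map_algebraMap_ne_top_iff_disjoint s _ P).mpr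
    (Set.disjoint_left.mpr hSP), ?_⟩
  rintro x y ⟨a, t, ha, rfl⟩ ⟨b, u, hb, rfl⟩ hmem hnot hxreg
  rw [Localization.mk_mul, Localization.mk_eq_mk'_apply] at hmem hnot
  rw [Localization.mk_eq_mk'_apply] at hxreg ⊢
  have hareg : IsReg a := IsLocalization.isReg_of_isReg_mk' hS hxreg
  have hbP : b ∈ P := IsLocalization.mem_of_mk'_mul_mem_map hShom hSreg hP ha hb hareg hmem
    (fun h => hnot (hsub h))
  exact IsLocalization.mk'_mem_map_of_mem hbP u

theorem stmt19 {G R : Type*} [AddGroup G] [DecidableEq G] [CommRing R] [Nontrivial R]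
    (𝒜 : G → AddSubgroup R) [GradedRing 𝒜]
    (s : Submonoid R)
    (hShom : ∀ t ∈ s, SetLike.IsHomogeneousElem 𝒜 t)
    (hSreg : ∀ t ∈ s, IsReg t)
    (P : Ideal R) (φ : Ideal R → Ideal R)
    (hP : IsGradedPhiRIdeal 𝒜 P ((φ P : Ideal R) : Set R))
    (hSP : ∀ t ∈ s, t ∉ P)
    -- S⁻¹φ(P) ⊆ φ_S(S⁻¹P), where φ_S(I) = S⁻¹φ(I ∩ R)
    (hsub : Ideal.map (algebraMap R (Localization s)) (φ P) ≤
      Ideal.map (algebraMap R (Localization s))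
        (φ (Ideal.comap (algebraMap R (Localization s))
          (Ideal.map (algebraMap R (Localization s)) P)))) :
    -- S⁻¹P is a graded φ_S-r-ideal of S⁻¹R
    Ideal.map (algebraMap R (Localization s)) P ≠ ⊤ ∧
      ∀ x y : Localization s,
        (∃ (a : R) (t : s), SetLike.IsHomogeneousElem 𝒜 a ∧ x = Localization.mk a t) →
        (∃ (b : R) (u : s), SetLike.IsHomogeneousElem 𝒜 b ∧ y = Localization.mk b u) →
        x * y ∈ Ideal.map (algebraMap R (Localization s)) P →
        x * y ∉ (Ideal.map (algebraMap R (Localization s))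
          (φ (Ideal.comap (algebraMap R (Localization s))
            (Ideal.map (algebraMap R (Localization s)) P))) : Set (Localization s)) →
        (∀ r : Localization s, r * x = 0 → r = 0) →
        y ∈ Ideal.map (algebraMap R (Localization s)) P :=
  stmt19_general 𝒜 s hShom hSreg P φ hP hSP hsub
end
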